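/- arXiv:1205.2437 — 4 statements merged into one kernel-verified Lean document; each statement's English description precedes it below -/
import Mathlib

section
/- Well-balanced property of the scheme: Let θ±, γ±, C₀, C₁ be as in the augmented coupling model, with ∂_u C₀(u,v) > 0. Let the initial data be u⁰_j = u* for all j (a constant), and let (v_{j+1/2})_j ⊂ [0,1] be arbitrary. Define the scheme: subcell states wⁿ_{j−1/2,+} = w(uⁿ_j, v_{j−1/2}), wⁿ_{j+1/2,−} = w(uⁿ_j, v_{j+1/2}), wⁿ_j = (wⁿ_{j−1/2,+} + wⁿ_{j+1/2,−})/2; evolution w^{n+1}_j = wⁿ_j − (Δt/Δx)(Gⁿ_{j+1/2,−} − Gⁿ_{j−1/2,+}) with Gⁿ_{j+1/2,−} = g(wⁿ_{j+1/2,−}, wⁿ_{j+1/2,+}; v_{j+1/2}) − f(wⁿ_{j+1/2,−}, v_{j+1/2}) and analogously for Gⁿ_{j−1/2,+}; then u^{n+1}_j is the unique solution of (w(u, v_{j−1/2}) + w(u, v_{j+1/2}))/2 = w^{n+1}_j. If g(a,a; v) = f(a,v) for all a, v (consistency), then uⁿ_j = u* for all j and all n ≥ 0. -/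
/-- The conserved variable `w(u,v) = C₀(u,v) = (1-v)γ₋(u) + vγ₊(u)` of the augmented
coupling model. -/
def wcomb (γm γp : ℝ → ℝ) (u v : ℝ) : ℝ := (1 - v) * γm u + v * γp u

lemma wcomb_strictMono (γm γp : ℝ → ℝ) (hγm : StrictMono γm) (hγp : StrictMono γp)
    (vv : ℝ) (hv : vv ∈ Set.Icc (0:ℝ) 1) : StrictMono (fun u => wcomb γm γp u vv) := by
  intro a b hab
  simp only [wcomb]
  have h1 : γm a < γm b := hγm hab
  have h2 : γp a < γp b := hγp hab
  have hv0 := hv.1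
  have hv1 : (0:ℝ) ≤ 1 - vv := by linarith [hv.2]
  rcases eq_or_lt_of_le hv0 with h | h
  · rw [← h]; nlinarith
  · nlinarith

theorem well_balanced_property
    (γm γp fm fp : ℝ → ℝ) (hγm : StrictMono γm) (hγp : StrictMono γp)
    (v : ℤ → ℝ) (hv : ∀ j, v j ∈ Set.Icc (0:ℝ) 1)
    (f : ℝ → ℝ → ℝ)
    (hf : ∀ uu vv, f (wcomb γm γp uu vv) vv = (1 - vv) * fm (γm uu) + vv * fp (γp uu))
    (g : ℝ → ℝ → ℝ → ℝ) (hcons : ∀ a vv, g a a vv = f a vv)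
    (dt dx ustar : ℝ) (hdt : 0 < dt) (hdx : 0 < dx)
    (u : ℕ → ℤ → ℝ) (h0 : ∀ j, u 0 j = ustar)
    (hscheme : ∀ (n : ℕ) (j : ℤ),
      (wcomb γm γp (u (n+1) j) (v (j-1)) + wcomb γm γp (u (n+1) j) (v j)) / 2
        = (wcomb γm γp (u n j) (v (j-1)) + wcomb γm γp (u n j) (v j)) / 2
          - dt / dx *
            ((g (wcomb γm γp (u n j) (v j)) (wcomb γm γp (u n (j+1)) (v j)) (v j)
                - f (wcomb γm γp (u n j) (v j)) (v j))
             - (g (wcomb γm γp (u n (j-1)) (v (j-1))) (wcomb γm γp (u n j) (v (j-1))) (v (j-1))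
                - f (wcomb γm γp (u n j) (v (j-1))) (v (j-1))))) :
    ∀ (n : ℕ) (j : ℤ), u n j = ustar := by
  intro n
  induction n with
  | zero => exact h0
  | succ n ih =>
    intro j
    have h := hscheme n j
    rw [ih j, ih (j+1), ih (j-1), hcons, hcons] at h
    simp only [sub_self, sub_zero, mul_zero] at h
    have hmono : StrictMono (fun x =>
        (wcomb γm γp x (v (j-1)) + wcomb γm γp x (v j)) / 2) := by
      have h1 := wcomb_strictMono γm γp hγm hγp (v (j-1)) (hv (j-1))
      have h2 := wcomb_strictMono γm γp hγm hγp (v j) (hv j)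
      intro a b hab
      have := h1 hab
      have := h2 hab
      simp only at *
      linarith
    exact hmono.injective h
end

section
/- Convex combination identity: with the scheme of the previous statement, define the evolved subcell states w^{n+1,−}_{j+1/2,−} = wⁿ_{j+1/2,−} − (2Δt/Δx)(gⁿ_{j+1/2} − f(wⁿ_{j+1/2,−}, v_{j+1/2})) and w^{n+1,−}_{j+1/2,+} = wⁿ_{j+1/2,+} − (2Δt/Δx)(f(wⁿ_{j+1/2,+}, v_{j+1/2}) − gⁿ_{j+1/2}), where gⁿ_{j+1/2} = g(wⁿ_{j+1/2,−}, wⁿ_{j+1/2,+}; v_{j+1/2}). Then the cell update satisfies w^{n+1}_j = (w^{n+1,−}_{j−1/2,+} + w^{n+1,−}_{j+1/2,−})/2. -/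
theorem subcell_convex_combination
    (wm wp gg : ℤ → ℝ) (fv : ℝ → ℤ → ℝ) (dt dx : ℝ) (j : ℤ)
    (wn : ℝ) (hwn : wn = (wp (j-1) + wm j) / 2)
    (wnp1 : ℝ)
    (hup : wnp1 = wn - dt / dx * ((gg j - fv (wm j) j) - (gg (j-1) - fv (wp (j-1)) (j-1))))
    (wm' wp' : ℤ → ℝ)
    (hm' : ∀ k, wm' k = wm k - 2 * (dt / dx) * (gg k - fv (wm k) k))
    (hp' : ∀ k, wp' k = wp k - 2 * (dt / dx) * (fv (wp k) k - gg k)) :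
    wnp1 = (wp' (j-1) + wm' j) / 2 := by
  subst hwn hup; rw [hm' j, hp' (j-1)]; ring
end

section
/- Total variation diminishing property of the averaging operator: Let u : ℝ → ℝ have bounded variation, and for Δx > 0 define the piecewise constant function P(u) by P(u)(x) = (1/Δx)·∫_{x_{j−1/2}}^{x_{j+1/2}} u(y) dy for x ∈ (x_{j−1/2}, x_{j+1/2}), with x_{j±1/2} = (j ± 1/2)Δx. Then TV(P(u)) ≤ TV(u). -/
/-!
Each cell average is an average of a translate of `u` over the reference cell
`C = (-Δx/2, Δx/2)`, so `|avg (j+1) - avg j| ≤ Δx⁻¹ ∫_C |u (y + (j+1)Δx) - u (y + jΔx)| dy`.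
Summing over `j` under the integral, for each fixed `y` the sum is the variation of `u` along
the grid `y + ℤΔx`, hence at most `TV(u)`; integrating over `C`, of length `Δx`, gives the claim.
-/

open MeasureTheory Set

namespace LocallyBoundedVariationOn

theorem exists_monotone_sub_monotone {α : Type*} [LinearOrder α] {f : α → ℝ}
    (hf : LocallyBoundedVariationOn f univ) :
    ∃ p q : α → ℝ, Monotone p ∧ Monotone q ∧ f = p - q := by
  obtain ⟨p, q, hp, hq, rfl⟩ := hf.exists_monotoneOn_sub_monotoneOn
  exact ⟨p, q, monotoneOn_univ.1 hp, monotoneOn_univ.1 hq, rfl⟩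

protected theorem measurable {α : Type*} [LinearOrder α] [TopologicalSpace α]
    [OrderClosedTopology α] [MeasurableSpace α] [BorelSpace α] {f : α → ℝ}
    (hf : LocallyBoundedVariationOn f univ) : Measurable f := by
  obtain ⟨p, q, hp, hq, rfl⟩ := hf.exists_monotone_sub_monotone
  exact hp.measurable.sub hq.measurable

theorem locallyIntegrable {α : Type*} [ConditionallyCompleteLinearOrder α] [TopologicalSpace α]
    [OrderTopology α] [MeasurableSpace α] [BorelSpace α] {μ : Measure α}
    [IsLocallyFiniteMeasure μ] {f : α → ℝ} (hf : LocallyBoundedVariationOn f univ) :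
    LocallyIntegrable f μ := by
  obtain ⟨p, q, hp, hq, rfl⟩ := hf.exists_monotone_sub_monotone
  exact hp.locallyIntegrable.sub hq.locallyIntegrable

end LocallyBoundedVariationOn

theorem eVariationOn.tsum_int_le {α E : Type*} [LinearOrder α] [PseudoEMetricSpace E]
    {f : α → E} {s : Set α} {u : ℤ → α} (hu : Monotone u) (us : ∀ i, u i ∈ s) :
    ∑' i, edist (f (u (i + 1))) (f (u i)) ≤ eVariationOn f s := by
  refine ENNReal.summable.tsum_le_of_sum_le fun F => ?_
  set N := F.sup Int.natAbs
  have hF : F ⊆ (Finset.range (2 * N + 1)).image fun i : ℕ => -(N : ℤ) + i := by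
    intro k hk
    have := Finset.le_sup (f := Int.natAbs) hk
    simp only [Finset.mem_image, Finset.mem_range]
    exact ⟨(k + N).toNat, by omega, by omega⟩
  calc ∑ i ∈ F, edist (f (u (i + 1))) (f (u i))
      ≤ ∑ i ∈ (Finset.range (2 * N + 1)).image fun i : ℕ => -(N : ℤ) + i,
          edist (f (u (i + 1))) (f (u i)) := Finset.sum_le_sum_of_subset hF
    _ = ∑ i ∈ Finset.range (2 * N + 1), edist (f (u (-N + (i + 1 : ℕ)))) (f (u (-N + i))) := by
      rw [Finset.sum_image fun i _ j _ h => by simpa using h]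
      simp only [Nat.cast_add, Nat.cast_one, add_assoc]
    _ ≤ eVariationOn f s :=
      eVariationOn.sum_le (u := fun i : ℕ => u (-N + i)) (fun i j hij => hu (by simpa using hij))
        fun i => us _

theorem enorm_integral_sub_integral_le {α E : Type*} [MeasurableSpace α] [NormedAddCommGroup E]
    [NormedSpace ℝ E] {μ : Measure α} {f g : α → E} (hf : Integrable f μ) (hg : Integrable g μ) :
    ‖∫ x, f x ∂μ - ∫ x, g x ∂μ‖ₑ ≤ ∫⁻ x, edist (f x) (g x) ∂μ := by
  simpa only [← integral_sub hf hg, edist_eq_enorm_sub] using enorm_integral_le_lintegral_enorm _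

theorem setIntegral_Ioo_comp_add_right {E : Type*} [NormedAddCommGroup E] [NormedSpace ℝ E]
    (f : ℝ → E) (a b c : ℝ) :
    ∫ x in Ioo a b, f (x + c) = ∫ x in Ioo (a + c) (b + c), f x := by
  rw [← image_add_const_Ioo]
  exact ((measurePreserving_add_right volume c).setIntegral_image_emb
    (measurableEmbedding_addRight c) f _).symm

theorem integrableOn_Ioo_comp_add_right {E : Type*} [NormedAddCommGroup E] {f : ℝ → E}
    {a b c : ℝ} :
    IntegrableOn (fun x => f (x + c)) (Ioo a b) ↔ IntegrableOn f (Ioo (a + c) (b + c)) := by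
  rw [← image_add_const_Ioo]
  exact ((measurePreserving_add_right volume c).integrableOn_image
    (measurableEmbedding_addRight c)).symm

theorem averaging_is_TVD_general
    (u : ℝ → ℝ) (Δx : ℝ) (hΔ : 0 < Δx)
    (hbv : eVariationOn u Set.univ ≠ ⊤)
    (avg : ℤ → ℝ)
    (havg : ∀ j : ℤ, avg j =
      (1 / Δx) * ∫ y in Set.Ioo (((j : ℝ) - 1/2) * Δx) (((j : ℝ) + 1/2) * Δx), u y) :
    ∑' j : ℤ, ENNReal.ofReal |avg (j + 1) - avg j| ≤ eVariationOn u Set.univ := by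
  set C := Ioo (-(Δx / 2)) (Δx / 2)
  have hu : LocallyBoundedVariationOn u univ :=
    BoundedVariationOn.locallyBoundedVariationOn hbv
  have hint (c : ℝ) : IntegrableOn (fun y => u (y + c)) C :=
    integrableOn_Ioo_comp_add_right.2 <|
      (hu.locallyIntegrable.integrableOn_isCompact isCompact_Icc).mono_set Ioo_subset_Icc_self
  have hcell (j : ℤ) : avg j = Δx⁻¹ * ∫ y in C, u (y + j * Δx) := by
    rw [havg, setIntegral_Ioo_comp_add_right, one_div]
    congr 4 <;> ring
  have hjump (j : ℤ) : ENNReal.ofReal |avg (j + 1) - avg j| ≤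
      ‖Δx⁻¹‖ₑ * ∫⁻ y in C, edist (u (y + ↑(j + 1) * Δx)) (u (y + j * Δx)) := by
    rw [← Real.enorm_eq_ofReal_abs, hcell, hcell, ← mul_sub, enorm_mul]
    gcongr
    exact enorm_integral_sub_integral_le (hint _) (hint _)
  have hsum (y : ℝ) :
      ∑' j : ℤ, edist (u (y + ↑(j + 1) * Δx)) (u (y + j * Δx)) ≤ eVariationOn u univ :=
    eVariationOn.tsum_int_le (f := u) (u := fun k : ℤ => y + k * Δx)
      (fun i j hij => by dsimp only; gcongr) fun _ => mem_univ _
  calc ∑' j : ℤ, ENNReal.ofReal |avg (j + 1) - avg j|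
      ≤ ∑' j : ℤ, ‖Δx⁻¹‖ₑ * ∫⁻ y in C, edist (u (y + ↑(j + 1) * Δx)) (u (y + j * Δx)) :=
        ENNReal.tsum_le_tsum hjump
    _ = ‖Δx⁻¹‖ₑ * ∫⁻ y in C, ∑' j : ℤ, edist (u (y + ↑(j + 1) * Δx)) (u (y + j * Δx)) := by
        have hmeas := hu.measurable
        rw [ENNReal.tsum_mul_left, lintegral_tsum fun j => by fun_prop]
    _ ≤ ‖Δx⁻¹‖ₑ * ∫⁻ _ in C, eVariationOn u univ := by gcongr with y; exact hsum y
    _ = eVariationOn u univ := by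
        rw [setLIntegral_const, Real.volume_Ioo, Real.enorm_of_nonneg (inv_nonneg.2 hΔ.le),
          mul_left_comm, ← ENNReal.ofReal_mul (inv_nonneg.2 hΔ.le), sub_neg_eq_add, add_halves,
          inv_mul_cancel₀ hΔ.ne', ENNReal.ofReal_one, mul_one]

theorem averaging_is_TVD
    (u : ℝ → ℝ) (Δx : ℝ) (hΔ : 0 < Δx)
    (hmeas : Measurable u)
    (hbv : eVariationOn u Set.univ ≠ ⊤)
    (avg : ℤ → ℝ)
    (havg : ∀ j : ℤ, avg j =
      (1 / Δx) * ∫ y in Set.Ioo (((j : ℝ) - 1/2) * Δx) (((j : ℝ) + 1/2) * Δx), u y) :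
    ∑' j : ℤ, ENNReal.ofReal |avg (j + 1) - avg j| ≤ eVariationOn u Set.univ :=
  averaging_is_TVD_general u Δx hΔ hbv avg havg
end

section
/- Entropy flux construction for the augmented system: let U : ℝ → ℝ be C¹ convex and define Q(u,v) = ∫^u U'(C₀(θ,v))·∂_u C₁(θ,v) dθ (an antiderivative in u). Then along smooth solutions of ∂_t C₀(u,v(x)) + ∂_u C₁(u,v(x))·∂ₓ u = 0 (with v = v(x) smooth and time-independent), the quantity U(C₀(u,v)) satisfies ∂_t U(C₀(u,v)) + ∂ₓ Q(u,v) − ∂_v Q(u,v)·∂ₓ v = 0. Concretely: for C¹ functions u(t,x) and v(x), if ∂_u C₀(u,v)·∂_t u + ∂_u C₁(u,v)·∂ₓ u = 0 pointwise, then ∂_t [U(C₀(u,v))] + ∂ₓ[Q(u,v(x))] − (∂_v Q)(u,v)·v'(x) = 0 pointwise. -/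
/-!
By the chain rule, `∂ₜ U(C₀(u,v)) = U'(C₀) ∂_u C₀ ∂ₜ u` and
`∂ₓ Q(u,v) = ∂_u Q ∂ₓ u + ∂_v Q v'`, where `∂_u Q = U'(C₀) ∂_u C₁` by construction of `Q`.
Hence `∂ₜ U(C₀) + ∂ₓ Q − ∂_v Q v' = U'(C₀) (∂_u C₀ ∂ₜ u + ∂_u C₁ ∂ₓ u)`, which vanishes by the PDE.
-/

/-- `C₀(u,v) = (1-v)γ₋(u) + vγ₊(u)`. -/
def C0 (γm γp : ℝ → ℝ) (u v : ℝ) : ℝ := (1 - v) * γm u + v * γp u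

/-- `∂_u C₀(u,v)`. -/
noncomputable def dC0 (γm γp : ℝ → ℝ) (u v : ℝ) : ℝ :=
  (1 - v) * deriv γm u + v * deriv γp u

/-- `∂_u C₁(u,v)` where `C₁(u,v) = (1-v)f⁻(γ₋(u)) + v f⁺(γ₊(u))`. -/
noncomputable def dC1 (γm γp fm fp : ℝ → ℝ) (u v : ℝ) : ℝ :=
  (1 - v) * deriv fm (γm u) * deriv γm u + v * deriv fp (γp u) * deriv γp u

section PartialDerivatives

variable {𝕜 E : Type*} [NontriviallyNormedField 𝕜] [NormedAddCommGroup E] [NormedSpace 𝕜 E]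

theorem DifferentiableAt.comp_prodMk_const_right {Q : 𝕜 → 𝕜 → E} {a b : 𝕜}
    (hQ : DifferentiableAt 𝕜 (fun p : 𝕜 × 𝕜 => Q p.1 p.2) (a, b)) :
    DifferentiableAt 𝕜 (fun s => Q s b) a :=
  hQ.comp (f := fun s => (s, b)) a (differentiableAt_id.prodMk (differentiableAt_const b))

theorem DifferentiableAt.comp_prodMk_const_left {Q : 𝕜 → 𝕜 → E} {a b : 𝕜}
    (hQ : DifferentiableAt 𝕜 (fun p : 𝕜 × 𝕜 => Q p.1 p.2) (a, b)) :
    DifferentiableAt 𝕜 (fun s => Q a s) b :=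
  hQ.comp (f := fun s => (a, s)) b ((differentiableAt_const a).prodMk differentiableAt_id)

theorem hasDerivAt_comp_of_differentiableAt_uncurry {Q : 𝕜 → 𝕜 → E} {f g : 𝕜 → 𝕜}
    {f' g' x : 𝕜} (hQ : DifferentiableAt 𝕜 (fun p : 𝕜 × 𝕜 => Q p.1 p.2) (f x, g x))
    (hf : HasDerivAt f f' x) (hg : HasDerivAt g g' x) :
    HasDerivAt (fun s => Q (f s) (g s))
      (f' • deriv (fun s => Q s (g x)) (f x) + g' • deriv (fun s => Q (f x) s) (g x)) x := by
  set L := fderiv 𝕜 (fun p : 𝕜 × 𝕜 => Q p.1 p.2) (f x, g x)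
  have hL : HasFDerivAt (fun p : 𝕜 × 𝕜 => Q p.1 p.2) L (f x, g x) := hQ.hasFDerivAt
  have h₁ : HasDerivAt (fun s => Q s (g x)) (L (1, 0)) (f x) :=
    hL.comp_hasDerivAt (f := fun s => (s, g x)) (f x)
      ((hasDerivAt_id (f x)).prodMk (hasDerivAt_const (f x) (g x)))
  have h₂ : HasDerivAt (fun s => Q (f x) s) (L (0, 1)) (g x) :=
    hL.comp_hasDerivAt (f := fun s => (f x, s)) (g x)
      ((hasDerivAt_const (g x) (f x)).prodMk (hasDerivAt_id (g x)))
  have hsplit : ((f', g') : 𝕜 × 𝕜) = f' • ((1 : 𝕜), (0 : 𝕜)) + g' • ((0 : 𝕜), (1 : 𝕜)) := by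
    simp
  rw [h₁.deriv, h₂.deriv, ← map_smul, ← map_smul, ← map_add, ← hsplit]
  exact hL.comp_hasDerivAt x (hf.prodMk hg)

end PartialDerivatives

theorem hasDerivAt_C0 {γm γp : ℝ → ℝ} {u : ℝ} (hγm : DifferentiableAt ℝ γm u)
    (hγp : DifferentiableAt ℝ γp u) (v : ℝ) :
    HasDerivAt (fun w => C0 γm γp w v) (dC0 γm γp u v) u :=
  (hγm.hasDerivAt.const_mul (1 - v)).add (hγp.hasDerivAt.const_mul v)

theorem entropy_flux_construction_general
    (γm γp fm fp U : ℝ → ℝ)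
    (hγm : ContDiff ℝ 1 γm) (hγp : ContDiff ℝ 1 γp)
    (hU : ContDiff ℝ 1 U)
    (Q : ℝ → ℝ → ℝ)
    (hQ : ContDiff ℝ 1 (fun p : ℝ × ℝ => Q p.1 p.2))
    -- `Q(·,v)` is an antiderivative of `U'(C₀(·,v)) ∂_u C₁(·,v)`:
    (hQder : ∀ θ v : ℝ, HasDerivAt (fun s => Q s v)
      (deriv U (C0 γm γp θ v) * dC1 γm γp fm fp θ v) θ)
    (u : ℝ → ℝ → ℝ) (v : ℝ → ℝ)
    (hv : ContDiff ℝ 1 v)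
    (hu : ContDiff ℝ 1 (fun p : ℝ × ℝ => u p.1 p.2))
    (t x : ℝ)
    -- the PDE `∂_u C₀ ∂_t u + ∂_u C₁ ∂_x u = 0` holds pointwise:
    (hPDE : ∀ t' x' : ℝ,
      dC0 γm γp (u t' x') (v x') * deriv (fun s => u s x') t'
        + dC1 γm γp fm fp (u t' x') (v x') * deriv (fun s => u t' s) x' = 0) :
    deriv (fun s => U (C0 γm γp (u s x) (v x))) t
      + deriv (fun s => Q (u t s) (v s)) x
      - deriv (fun s => Q (u t x) s) (v x) * deriv v x = 0 := by
  have hu_diff := hu.differentiable one_ne_zero (t, x)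
  have hut := hu_diff.comp_prodMk_const_right.hasDerivAt
  have hux := hu_diff.comp_prodMk_const_left.hasDerivAt
  have hC0 := hasDerivAt_C0 (hγm.differentiable one_ne_zero (u t x))
    (hγp.differentiable one_ne_zero (u t x)) (v x)
  have htime : HasDerivAt (fun s => U (C0 γm γp (u s x) (v x)))
      (deriv U (C0 γm γp (u t x) (v x)) *
        (dC0 γm γp (u t x) (v x) * deriv (fun s => u s x) t)) t :=
    (hU.differentiable one_ne_zero _).hasDerivAt.comp t
      (hC0.comp (h₂ := fun w => C0 γm γp w (v x)) t hut)
  have hspace := (hasDerivAt_comp_of_differentiableAt_uncurry (hQ.differentiable one_ne_zero _)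
    hux ((hv.differentiable one_ne_zero x).hasDerivAt)).deriv
  rw [htime.deriv, hspace, (hQder _ _).deriv]
  linear_combination deriv U (C0 γm γp (u t x) (v x)) * hPDE t x

theorem entropy_flux_construction
    (γm γp fm fp U : ℝ → ℝ)
    (hγm : ContDiff ℝ 1 γm) (hγp : ContDiff ℝ 1 γp)
    (hfm : ContDiff ℝ 1 fm) (hfp : ContDiff ℝ 1 fp)
    (hU : ContDiff ℝ 1 U)
    (Q : ℝ → ℝ → ℝ)
    (hQ : ContDiff ℝ 1 (fun p : ℝ × ℝ => Q p.1 p.2))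
    -- `Q(·,v)` is an antiderivative of `U'(C₀(·,v)) ∂_u C₁(·,v)`:
    (hQder : ∀ θ v : ℝ, HasDerivAt (fun s => Q s v)
      (deriv U (C0 γm γp θ v) * dC1 γm γp fm fp θ v) θ)
    (u : ℝ → ℝ → ℝ) (v : ℝ → ℝ)
    (hv : ContDiff ℝ 1 v)
    (hu : ContDiff ℝ 1 (fun p : ℝ × ℝ => u p.1 p.2))
    (t x : ℝ)
    -- the PDE `∂_u C₀ ∂_t u + ∂_u C₁ ∂_x u = 0` holds pointwise:
    (hPDE : ∀ t' x' : ℝ,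
      dC0 γm γp (u t' x') (v x') * deriv (fun s => u s x') t'
        + dC1 γm γp fm fp (u t' x') (v x') * deriv (fun s => u t' s) x' = 0) :
    deriv (fun s => U (C0 γm γp (u s x) (v x))) t
      + deriv (fun s => Q (u t s) (v s)) x
      - deriv (fun s => Q (u t x) s) (v x) * deriv v x = 0 :=
  entropy_flux_construction_general γm γp fm fp U hγm hγp hU Q hQ hQder u v hv hu t x hPDE
end
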